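/- Let G be a finite abelian group of exponent 2, χ : G × G → ℂˣ a non-degenerate bicharacter, and σ : G → ℂˣ with σ(e)=1 and σ(ab) = σ(a)σ(b)χ(a,b) for all a,b. Then |∑_{a ∈ G} σ(a)|² = |G|; equivalently (∑_{a} σ(a))·(∑_{b} σ(b)⁻¹) = |G|. -/
import Mathlib


/-- Gauss sum identity: for a quadratic form `σ` associated to a
non-degenerate bicharacter `χ` on a finite elementary abelian 2-group,
`(∑_a σ(a)) · (∑_b σ(b)⁻¹) = |G|`. -/
theorem stmt_4 {G : Type*} [CommGroup G] [Fintype G]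
    (h2 : ∀ a : G, a * a = 1)
    (χ : G → G → ℂˣ)
    (hmul_left : ∀ a b c : G, χ (a * b) c = χ a c * χ b c)
    (hmul_right : ∀ a b c : G, χ a (b * c) = χ a b * χ a c)
    (hnd : ∀ a : G, a ≠ 1 → ∃ b : G, χ a b ≠ 1)
    (σ : G → ℂˣ)
    (hσe : σ 1 = 1)
    (hσχ : ∀ a b : G, σ (a * b) = σ a * σ b * χ a b) :
    (∑ a : G, (σ a : ℂ)) * (∑ b : G, (((σ b)⁻¹ : ℂˣ) : ℂ)) =
      (Fintype.card G : ℂ) := by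
  have hsym : ∀ a b : G, χ a b = χ b a := by
    intro a b
    have h1 := hσχ a b
    have h2' := hσχ b a
    rw [mul_comm b a] at h2'
    rw [h1] at h2'
    have : σ a * σ b * χ a b = σ a * σ b * χ b a := by
      rw [h2', mul_comm (σ b) (σ a)]
    exact mul_left_cancel this
  have hχ1 : ∀ b : G, χ b 1 = 1 := by
    intro b
    have := hmul_right b 1 1
    rw [mul_one] at this
    exact (mul_right_cancel (by rw [← this, one_mul])).symm
  have key : ∀ c : G, c ≠ 1 → ∑ b : G, ((χ b c : ℂ)) = 0 := by
    intro c hc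
    obtain ⟨b0, hb0⟩ := hnd c hc
    have hshift : ∑ b : G, ((χ b c : ℂ)) = ∑ b : G, ((χ (b0 * b) c : ℂ)) :=
      (Fintype.sum_equiv (Equiv.mulLeft b0) _ _ (fun b => rfl)).symm
    have heq : ∑ b : G, ((χ b c : ℂ)) = (χ b0 c : ℂ) * ∑ b : G, ((χ b c : ℂ)) := by
      conv_lhs => rw [hshift]
      rw [Finset.mul_sum]
      exact Finset.sum_congr rfl fun b _ => by rw [hmul_left]; push_cast; ring
    have hne : (χ b0 c : ℂ) ≠ 1 := by
      intro h
      exact (hsym c b0 ▸ hb0) (Units.val_eq_one.mp h)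
    have hz : ((χ b0 c : ℂ) - 1) * ∑ b : G, ((χ b c : ℂ)) = 0 := by
      linear_combination -heq
    rcases mul_eq_zero.mp hz with h | h
    · exact absurd (sub_eq_zero.mp h) hne
    · exact h
  calc (∑ a : G, (σ a : ℂ)) * (∑ b : G, (((σ b)⁻¹ : ℂˣ) : ℂ))
      = ∑ b : G, ∑ a : G, (σ a : ℂ) * (((σ b)⁻¹ : ℂˣ) : ℂ) := by
        rw [Finset.sum_mul_sum, Finset.sum_comm]
    _ = ∑ b : G, ∑ c : G, (σ c : ℂ) * (χ b c : ℂ) := by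
        refine Finset.sum_congr rfl fun b _ => ?_
        refine (Fintype.sum_equiv (Equiv.mulLeft b) _ _ fun c => ?_).symm
        simp only [Equiv.coe_mulLeft]
        rw [hσχ b c]
        have hb : (σ b : ℂ) ≠ 0 := Units.ne_zero _
        push_cast
        field_simp
    _ = ∑ c : G, (σ c : ℂ) * ∑ b : G, (χ b c : ℂ) := by
        rw [Finset.sum_comm]
        exact Finset.sum_congr rfl fun c _ => by rw [Finset.mul_sum]
    _ = (Fintype.card G : ℂ) := by
        rw [Fintype.sum_eq_single 1 (fun c hc => by rw [key c hc, mul_zero])]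
        simp [hσe, hχ1, Finset.card_univ]
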